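/- (Sharpness of the endpoint regularity) There exists a nonnegative function g ∈ ℓ¹(ℤ) such that for the one-dimensional centered discrete Hardy–Littlewood maximal operator M, the discrete derivative (Mg)′ does not belong to ℓ^p(ℤ) for any 0 < p < 1; that is, Σ_{n∈ℤ} |Mg(n + 1) − Mg(n)|^p = ∞ for every p ∈ (0, 1). -/

import Mathlib

/-!
Place spikes of height `c k = 1 / ((k + 2) log² (k + 2))` at integers `x k` so sparse that every
other spike is at distance at least `3 ‖c‖₁ / c k + 1` from `x k`, and let `g = ∑ c k δ_{x k}`.
Every centered average at `n` is at most `∑ m, |g m| / (2 |m - n| + 1)`; at `n = x k + 1` the spike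
at `x k` contributes `c k / 3` to this and the others at most `c k / 6`, so `Mg (x k + 1) ≤ c k / 2`,
while `Mg (x k) ≥ g (x k) = c k`. Hence `|(Mg)' (x k)| ≥ c k / 2`. Finally `∑ c k < ∞` by Cauchy
condensation, whereas `c k ^ p ≥ 1 / (k + 2)` eventually for `p < 1`, because `log` grows slower
than every power.
-/

open scoped BigOperators

noncomputable section

/-- The one-dimensional centered discrete Hardy–Littlewood maximal operator
`Mf(n) = sup_{r ≥ 0} (2r+1)⁻¹ Σ_{m=-r}^{r} |f(n+m)|`. -/
def M1 (f : ℤ → ℝ) (n : ℤ) : ℝ :=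
  ⨆ r : ℕ, (2 * (r : ℝ) + 1)⁻¹ * ∑ m ∈ Finset.Icc (-(r : ℤ)) (r : ℤ), |f (n + m)|

open Finset Function Real Filter

/-- One over the length of the shortest centered window containing `z`. -/
def windowWeight (z : ℤ) : ℝ := (2 * |(z : ℝ)| + 1)⁻¹

lemma windowWeight_nonneg (z : ℤ) : 0 ≤ windowWeight z := by
  unfold windowWeight; positivity

lemma windowWeight_le_one (z : ℤ) : windowWeight z ≤ 1 :=
  inv_le_one_of_one_le₀ (by linarith [abs_nonneg (z : ℝ)])

lemma inv_le_windowWeight {r : ℕ} {m : ℤ} (hm : m ∈ Icc (-(r : ℤ)) r) :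
    (2 * (r : ℝ) + 1)⁻¹ ≤ windowWeight m := by
  have : |(m : ℝ)| ≤ r := abs_le.2 (by simp only [mem_Icc] at hm; exact_mod_cast hm)
  exact inv_anti₀ (by positivity) (by linarith)

lemma Summable.abs_mul_windowWeight {ι : Type*} {f : ι → ℝ} (hf : Summable f) (z : ι → ℤ) :
    Summable fun i => |f i| * windowWeight (z i) :=
  hf.abs.of_nonneg_of_le (fun _ => mul_nonneg (abs_nonneg _) (windowWeight_nonneg _))
    fun _ => mul_le_of_le_one_right (abs_nonneg _) (windowWeight_le_one _)

lemma average_le_tsum_abs_mul_windowWeight {f : ℤ → ℝ} (hf : Summable f) (n : ℤ) (r : ℕ) :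
    (2 * (r : ℝ) + 1)⁻¹ * ∑ m ∈ Icc (-(r : ℤ)) r, |f (n + m)| ≤
      ∑' m, |f m| * windowWeight (m - n) := by
  have hshift := (Equiv.addLeft n).summable_iff.2 (hf.abs_mul_windowWeight (· - n))
  calc (2 * (r : ℝ) + 1)⁻¹ * ∑ m ∈ Icc (-(r : ℤ)) r, |f (n + m)|
      ≤ ∑ m ∈ Icc (-(r : ℤ)) r, |f (n + m)| * windowWeight (n + m - n) := by
        rw [mul_sum]
        refine sum_le_sum fun m hm => ?_
        rw [add_sub_cancel_left, mul_comm]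
        exact mul_le_mul_of_nonneg_left (inv_le_windowWeight hm) (abs_nonneg _)
    _ ≤ ∑' m, |f (n + m)| * windowWeight (n + m - n) :=
        hshift.sum_le_tsum _ fun m _ => mul_nonneg (abs_nonneg _) (windowWeight_nonneg _)
    _ = ∑' m, |f m| * windowWeight (m - n) :=
        (Equiv.addLeft n).tsum_eq fun m => |f m| * windowWeight (m - n)

lemma M1_le_tsum_abs_mul_windowWeight {f : ℤ → ℝ} (hf : Summable f) (n : ℤ) :
    M1 f n ≤ ∑' m, |f m| * windowWeight (m - n) :=
  ciSup_le (average_le_tsum_abs_mul_windowWeight hf n)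

lemma abs_le_M1 {f : ℤ → ℝ} (hf : Summable f) (n : ℤ) : |f n| ≤ M1 f n := by
  have hbdd : BddAbove (Set.range fun r : ℕ =>
      (2 * (r : ℝ) + 1)⁻¹ * ∑ m ∈ Icc (-(r : ℤ)) r, |f (n + m)|) :=
    ⟨_, Set.forall_mem_range.2 (average_le_tsum_abs_mul_windowWeight hf n)⟩
  simpa [M1] using le_ciSup hbdd 0

section Spikes

variable {c : ℕ → ℝ} {x : ℕ → ℤ}

lemma tsum_abs_extend_mul_windowWeight (hx : Injective x) (n : ℤ) :
    ∑' m, |extend x c 0 m| * windowWeight (m - n) = ∑' j, |c j| * windowWeight (x j - n) := by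
  rw [← tsum_extend_zero hx]
  congr 1
  ext m
  by_cases hm : ∃ j, x j = m
  · obtain ⟨j, rfl⟩ := hm
    simp only [hx.extend_apply]
  · simp only [extend_apply' _ _ _ hm, Pi.zero_apply, abs_zero, zero_mul]

lemma windowWeight_sub_succ_le {s : ℝ} {a b : ℤ} (hs : 0 < s) (hab : 3 * s + 1 ≤ |(a : ℝ) - b|) :
    windowWeight (a - (b + 1)) ≤ (6 * s)⁻¹ := by
  have : |(a : ℝ) - b| - 1 ≤ |((a - (b + 1) : ℤ) : ℝ)| := by
    push_cast
    simpa [sub_sub] using abs_sub_abs_le_abs_sub ((a : ℝ) - b) 1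
  exact inv_anti₀ (by positivity) (by linarith)

variable (hc : ∀ k, 0 < c k) (hsum : Summable c) (hx : Injective x)
  (hsep : ∀ j k, j ≠ k → 3 * ((∑' i, c i) / c k) + 1 ≤ |(x j : ℝ) - x k|)
include hc hsum hx hsep

lemma M1_extend_succ_le (k : ℕ) : M1 (extend x c 0) (x k + 1) ≤ c k / 2 := by
  set S := ∑' i, c i
  have hS : 0 < S := hsum.tsum_pos (fun i => (hc i).le) 0 (hc 0)
  have hε : 0 ≤ (6 * (S / c k))⁻¹ := by have := hc k; positivity
  have hterm : ∀ j, |c j| * windowWeight (x j - (x k + 1)) ≤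
      c j * (6 * (S / c k))⁻¹ + if j = k then c k / 3 else 0 := by
    intro j
    rw [abs_of_pos (hc j)]
    split_ifs with hj
    · subst hj
      have : windowWeight (x j - (x j + 1)) = 1 / 3 := by norm_num [windowWeight]
      rw [this]
      linarith [mul_nonneg (hc j).le hε]
    · have := windowWeight_sub_succ_le (div_pos hS (hc k)) (hsep j k hj)
      rw [add_zero]
      exact mul_le_mul_of_nonneg_left this (hc j).le
  have hsum_rhs : Summable fun j => c j * (6 * (S / c k))⁻¹ + if j = k then c k / 3 else 0 :=
    (hsum.mul_right _).add (hasSum_ite_eq k _).summable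
  calc M1 (extend x c 0) (x k + 1)
      ≤ ∑' j, |c j| * windowWeight (x j - (x k + 1)) := by
        rw [← tsum_abs_extend_mul_windowWeight hx]
        exact M1_le_tsum_abs_mul_windowWeight ((summable_extend_zero hx).2 hsum) _
    _ ≤ ∑' j, (c j * (6 * (S / c k))⁻¹ + if j = k then c k / 3 else 0) :=
        (hsum.abs_mul_windowWeight _).tsum_le_tsum hterm hsum_rhs
    _ = c k / 2 := by
        rw [(hsum.mul_right _).tsum_add (hasSum_ite_eq k _).summable, tsum_mul_right, tsum_ite_eq]
        field_simp
        ring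

lemma half_le_abs_M1_extend_succ_sub (k : ℕ) :
    c k / 2 ≤ |M1 (extend x c 0) (x k + 1) - M1 (extend x c 0) (x k)| := by
  have hpeak : c k ≤ M1 (extend x c 0) (x k) := by
    simpa [hx.extend_apply, abs_of_pos (hc k)] using
      abs_le_M1 ((summable_extend_zero hx).2 hsum) (x k)
  rw [abs_sub_comm]
  exact (le_abs_self _).trans' (by linarith [M1_extend_succ_le hc hsum hx hsep k])

end Spikes

lemma exists_injective_separated (b : ℕ → ℝ) :
    ∃ x : ℕ → ℤ, Injective x ∧ ∀ j k, j ≠ k → b k ≤ |(x j : ℝ) - x k| := by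
  set y : ℕ → ℕ := fun k => ∑ i ∈ range k, (⌈b i⌉₊ + ⌈b (i + 1)⌉₊ + 1)
  have hy : Monotone y := fun _ _ h => sum_le_sum_of_subset (range_subset_range.2 h)
  have hgap {j k : ℕ} (hjk : j < k) : y j + ⌈b j⌉₊ < y k ∧ y j + ⌈b k⌉₊ < y k := by
    obtain ⟨m, rfl⟩ := Nat.exists_eq_add_of_lt hjk
    have h1 := hy (show j + 1 ≤ j + m + 1 by omega)
    have h2 := hy (show j ≤ j + m by omega)
    simp only [y, sum_range_succ] at h1 h2 ⊢
    omega
  have hreal {i j k : ℕ} (h : y j + ⌈b i⌉₊ < y k) : b i ≤ (y k : ℝ) - y j := by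
    have : (y j : ℝ) + ⌈b i⌉₊ ≤ y k := by exact_mod_cast h.le
    linarith [Nat.le_ceil (b i)]
  refine ⟨fun k => y k, ?_, fun j k hjk => ?_⟩
  · have : StrictMono y := strictMono_nat_of_lt_succ fun i => by
      have := (hgap i.lt_add_one).1; omega
    exact Nat.cast_injective.comp this.injective
  · push_cast
    rcases hjk.lt_or_gt with h | h
    · exact le_abs.2 (Or.inr (by linarith [hreal (hgap h).2]))
    · exact le_abs.2 (Or.inl (hreal (hgap h).1))

section Bertrand

def bertrand (k : ℕ) : ℝ := (((k : ℝ) + 2) * log ((k : ℝ) + 2) ^ 2)⁻¹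

lemma one_lt_natCast_add_two (k : ℕ) : (1 : ℝ) < k + 2 := by linarith [k.cast_nonneg (α := ℝ)]

lemma bertrand_pos (k : ℕ) : 0 < bertrand k := by
  have := log_pos (one_lt_natCast_add_two k)
  unfold bertrand; positivity

lemma bertrand_anti {j k : ℕ} (hjk : j ≤ k) : bertrand k ≤ bertrand j := by
  have hj := log_pos (one_lt_natCast_add_two j)
  unfold bertrand
  gcongr

lemma summable_bertrand : Summable bertrand := by
  refine (summable_condensed_iff_of_nonneg (fun k => (bertrand_pos k).le)
    fun _ _ _ h => bertrand_anti h).1 ?_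
  refine ((summable_nat_pow_inv.2 one_lt_two).mul_left (log 2 ^ 2)⁻¹).of_norm_bounded_eventually_nat ?_
  filter_upwards [eventually_ge_atTop 1] with k hk
  have hk2 : 0 < (k : ℝ) * log 2 := by positivity
  have hlog : (k : ℝ) * log 2 ≤ log ((2 : ℝ) ^ k + 2) := by
    rw [← log_pow]; exact log_le_log (by positivity) (by linarith)
  rw [Real.norm_of_nonneg (by have := bertrand_pos (2 ^ k); positivity), bertrand]
  push_cast
  calc (2 : ℝ) ^ k * (((2 : ℝ) ^ k + 2) * log ((2 : ℝ) ^ k + 2) ^ 2)⁻¹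
      ≤ (log ((2 : ℝ) ^ k + 2) ^ 2)⁻¹ := by
        rw [mul_inv, ← mul_assoc]
        refine mul_le_of_le_one_left (by positivity) ?_
        rw [← div_eq_mul_inv, div_le_one (by positivity)]; linarith
    _ ≤ ((k : ℝ) * log 2)⁻¹ ^ 2 := by rw [inv_pow]; gcongr
    _ = (log 2 ^ 2)⁻¹ * ((k : ℝ) ^ 2)⁻¹ := by ring

lemma inv_le_bertrand_rpow {p : ℝ} (k : ℕ)
    (hk : log ((k : ℝ) + 2) ^ (2 * p) ≤ ((k : ℝ) + 2) ^ (1 - p)) :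
    ((k : ℝ) + 2)⁻¹ ≤ bertrand k ^ p := by
  set t : ℝ := (k : ℝ) + 2
  have ht : 1 < t := one_lt_natCast_add_two k
  have hL := log_pos ht
  have hpow : (t * log t ^ 2) ^ p ≤ t := calc
    (t * log t ^ 2) ^ p = t ^ p * log t ^ (2 * p) := by
      rw [mul_rpow (by positivity) (by positivity), ← rpow_natCast, ← rpow_mul hL.le]; norm_num
    _ ≤ t ^ p * t ^ (1 - p) := by gcongr
    _ = t := by rw [← rpow_add (by positivity)]; norm_num
  rw [bertrand, inv_rpow (by positivity)]
  exact inv_anti₀ (by positivity) hpow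

lemma not_summable_bertrand_rpow {p : ℝ} (hp1 : p < 1) :
    ¬ Summable fun k => bertrand k ^ p := by
  intro hsum
  have hlog : ∀ᶠ t : ℝ in atTop, log t ^ (2 * p) ≤ t ^ (1 - p) := by
    filter_upwards [(isLittleO_log_rpow_rpow_atTop (2 * p) (sub_pos.2 hp1)).bound one_pos,
      eventually_ge_atTop 1] with t ht ht1
    rwa [one_mul, Real.norm_of_nonneg (rpow_nonneg (log_nonneg ht1) _),
      Real.norm_of_nonneg (rpow_nonneg (zero_le_one.trans ht1) _)] at ht
  have hshift : Summable fun k : ℕ => ((k + 2 : ℕ) : ℝ)⁻¹ := by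
    refine hsum.of_norm_bounded_eventually_nat ?_
    filter_upwards [(tendsto_atTop_add_const_right _ 2 tendsto_natCast_atTop_atTop).eventually hlog]
      with k hk
    rw [norm_inv, Real.norm_of_nonneg (by positivity)]
    push_cast
    exact inv_le_bertrand_rpow k hk
  exact Real.not_summable_natCast_inv ((summable_nat_add_iff 2).1 hshift)

end Bertrand

/-- **Sharpness of the endpoint regularity**: there is a nonnegative `g ∈ ℓ¹(ℤ)` such
that the discrete derivative `(Mg)'` fails to lie in `ℓ^p(ℤ)` for every `0 < p < 1`. -/
theorem sharpness_endpoint :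
    ∃ g : ℤ → ℝ, (∀ n : ℤ, 0 ≤ g n) ∧ Summable g ∧
      ∀ p : ℝ, 0 < p → p < 1 →
        ¬ Summable (fun n : ℤ => |M1 g (n + 1) - M1 g n| ^ p) := by
  obtain ⟨x, hx, hsep⟩ :=
    exists_injective_separated fun k => 3 * ((∑' i, bertrand i) / bertrand k) + 1
  set g := extend x bertrand 0
  have hg : 0 ≤ g := extend_nonneg (fun k => (bertrand_pos k).le) le_rfl
  refine ⟨g, hg, (summable_extend_zero hx).2 summable_bertrand, fun p hp0 hp1 hsum => ?_⟩
  have hjump (k : ℕ) : (bertrand k / 2) ^ p ≤ |M1 g (x k + 1) - M1 g (x k)| ^ p :=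
    rpow_le_rpow (div_pos (bertrand_pos k) two_pos).le
      (half_le_abs_M1_extend_succ_sub bertrand_pos summable_bertrand hx hsep k) hp0.le
  have hhalf : Summable fun k => (bertrand k / 2) ^ p :=
    (hsum.comp_injective hx).of_nonneg_of_le
      (fun k => rpow_nonneg (div_pos (bertrand_pos k) two_pos).le p) hjump
  simp_rw [div_rpow (bertrand_pos _).le zero_le_two] at hhalf
  exact not_summable_bertrand_rpow hp1 ((summable_div_const_iff (by positivity)).1 hhalf)

end
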